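/- With c₁ = (1,-1,0,0) (so that c₁ = ½e₁ + ½d₃ + ½d₄ lies on the 3-dimensional cone cone(e₁,d₃,d₄)), the cone σ₁₃ = cone(e₁,d₃,e₃,d₄) equals the union cone(c₁,d₃,e₃,d₄) ∪ cone(e₁,c₁,e₃,d₄) ∪ cone(e₁,d₃,e₃,c₁), and each of these three cones has generator matrix (columns in the listed order) of determinant 1. -/

import Mathlib

open Matrix

noncomputable section

def e1 : Fin 4 → ℝ := ![1, 0, 0, 0]
def e2 : Fin 4 → ℝ := ![0, 1, 0, 0]
def e3 : Fin 4 → ℝ := ![0, 0, 1, 0]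
def e4 : Fin 4 → ℝ := ![0, 0, 0, 1]
def d1 : Fin 4 → ℝ := ![-1, 0, -2, 1]
def d2 : Fin 4 → ℝ := ![-2, -1, 0, 1]
def d3 : Fin 4 → ℝ := ![0, -2, -1, 1]
def d4 : Fin 4 → ℝ := ![1, 0, 1, -1]
def c1 : Fin 4 → ℝ := ![1, -1, 0, 0]

/-- The cone generated by four vectors: all nonnegative linear combinations. -/
def cone4 (v1 v2 v3 v4 : Fin 4 → ℝ) : Set (Fin 4 → ℝ) :=
  {x | ∃ a b c d : ℝ, 0 ≤ a ∧ 0 ≤ b ∧ 0 ≤ c ∧ 0 ≤ d ∧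
    x = a • v1 + b • v2 + c • v3 + d • v4}

/-- The 4×4 matrix whose columns are `v1, v2, v3, v4` (in this order). -/
def colMat (v1 v2 v3 v4 : Fin 4 → ℝ) : Matrix (Fin 4) (Fin 4) ℝ :=
  (Matrix.of ![v1, v2, v3, v4])ᵀ

/-!
Since `c1 = ½ (e1 + d3 + d4)`, the three cones form the stellar subdivision of `σ₁₃` at `c1`: in
`a e1 + b d3 + c e3 + d d4` one trades `min a b d • (e1 + d3 + d4)` for a multiple of `c1`, and the
point lands in the cone where a generator with minimal coefficient is replaced by `c1`.
Replacing a generator by `c1` halves the determinant by multilinearity, and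
`det (e1, d3, e3, d4) = 2`.
-/

theorem Matrix.det_updateRow_smul_add_add {n R : Type*} [Fintype n] [DecidableEq n] [CommRing R]
    (A : Matrix n n R) {i j k : n} (hi : i ≠ k) (hj : j ≠ k) (t : R) :
    (A.updateRow k (t • (A k + A i + A j))).det = t * A.det := by
  have repeated_row {l : n} (hl : l ≠ k) : (A.updateRow k (A l)).det = 0 :=
    det_zero_of_row_eq hl ((updateRow_ne hl).trans updateRow_self.symm)
  rw [det_updateRow_smul, det_updateRow_add, det_updateRow_add, updateRow_eq_self,
    repeated_row hi, repeated_row hj, add_zero, add_zero]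

theorem det_colMat (v1 v2 v3 v4 : Fin 4 → ℝ) :
    (colMat v1 v2 v3 v4).det = (of ![v1, v2, v3, v4]).det :=
  det_transpose _

section StellarSubdivision

variable (u v y z : Fin 4 → ℝ) (t : ℝ)

theorem det_colMat_smul_add_first :
    (colMat (t • (u + v + z)) v y z).det = t * (colMat u v y z).det := by
  have hrow : of ![t • (u + v + z), v, y, z] =
      (of ![u, v, y, z]).updateRow 0 (t • (u + v + z)) := by
    ext i; fin_cases i <;> rfl
  rw [det_colMat, det_colMat, hrow]
  exact det_updateRow_smul_add_add _ (i := 1) (j := 3) (by decide) (by decide) t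

theorem det_colMat_smul_add_second :
    (colMat u (t • (u + v + z)) y z).det = t * (colMat u v y z).det := by
  have hrow : of ![u, t • (u + v + z), y, z] =
      (of ![u, v, y, z]).updateRow 1 (t • (v + u + z)) := by
    ext i; fin_cases i <;> simp [add_comm u v]
  rw [det_colMat, det_colMat, hrow]
  exact det_updateRow_smul_add_add _ (i := 0) (j := 3) (by decide) (by decide) t

theorem det_colMat_smul_add_fourth :
    (colMat u v y (t • (u + v + z))).det = t * (colMat u v y z).det := by
  have hrow : of ![u, v, y, t • (u + v + z)] =
      (of ![u, v, y, z]).updateRow 3 (t • (z + u + v)) := by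
    ext i; fin_cases i <;> simp [add_comm, add_left_comm]
  rw [det_colMat, det_colMat, hrow]
  exact det_updateRow_smul_add_add _ (i := 0) (j := 1) (by decide) (by decide) t

variable {u v y z t}

theorem cone4_eq_union_of_eq_smul_add {w : Fin 4 → ℝ} (ht : 0 < t) (hw : w = t • (u + v + z)) :
    cone4 u v y z = cone4 w v y z ∪ cone4 u w y z ∪ cone4 u v y w := by
  subst hw
  have hwt (m : ℝ) : (m / t) • (t • (u + v + z)) = m • (u + v + z) := by
    rw [smul_smul, div_mul_cancel₀ _ ht.ne']
  ext x
  constructor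
  · rintro ⟨a, b, c, d, ha, hb, hc, hd, rfl⟩
    rcases le_total d (min a b) with hdab | habd
    · rw [le_min_iff] at hdab
      refine .inr ⟨a - d, b - d, c, d / t, by linarith, by linarith, hc, by positivity, ?_⟩
      rw [hwt]; module
    · rcases le_total a b with hab | hba
      · have had : a ≤ d := (min_eq_left hab).symm.trans_le habd
        refine .inl (.inl ⟨a / t, b - a, c, d - a, by positivity, by linarith, hc, by linarith, ?_⟩)
        rw [hwt]; module
      · have hbd : b ≤ d := (min_eq_right hba).symm.trans_le habd
        refine .inl (.inr ⟨a - b, b / t, c, d - b, by linarith, by positivity, hc, by linarith, ?_⟩)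
        rw [hwt]; module
  · rintro ((⟨a, b, c, d, ha, hb, hc, hd, rfl⟩ | ⟨a, b, c, d, ha, hb, hc, hd, rfl⟩) |
        ⟨a, b, c, d, ha, hb, hc, hd, rfl⟩)
    · exact ⟨a * t, b + a * t, c, d + a * t, by positivity, by positivity, hc, by positivity,
        by module⟩
    · exact ⟨a + b * t, b * t, c, d + b * t, by positivity, by positivity, hc, by positivity,
        by module⟩
    · exact ⟨a + d * t, b + d * t, c, d * t, by positivity, by positivity, hc, by positivity,
        by module⟩

end StellarSubdivision

theorem c1_eq_half_smul_add : c1 = (1/2 : ℝ) • (e1 + d3 + d4) := by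
  ext i; fin_cases i <;> norm_num [c1, e1, d3, d4]

theorem det_colMat_e1_d3_e3_d4 : (colMat e1 d3 e3 d4).det = 2 := by
  rw [det_colMat]
  simp [det_succ_row_zero, Fin.sum_univ_succ, e1, d3, e3, d4]

theorem subdivision_of_sigma13 :
    c1 = (1/2 : ℝ) • e1 + (1/2 : ℝ) • d3 + (1/2 : ℝ) • d4 ∧
    cone4 e1 d3 e3 d4 =
      cone4 c1 d3 e3 d4 ∪
      cone4 e1 c1 e3 d4 ∪
      cone4 e1 d3 e3 c1 ∧
    (colMat c1 d3 e3 d4).det = 1 ∧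
    (colMat e1 c1 e3 d4).det = 1 ∧
    (colMat e1 d3 e3 c1).det = 1 := by
  have half_det : (1/2 : ℝ) * (colMat e1 d3 e3 d4).det = 1 := by
    rw [det_colMat_e1_d3_e3_d4]; norm_num
  refine ⟨by rw [c1_eq_half_smul_add, smul_add, smul_add],
    cone4_eq_union_of_eq_smul_add (by norm_num) c1_eq_half_smul_add, ?_, ?_, ?_⟩ <;>
    rw [c1_eq_half_smul_add]
  · rw [det_colMat_smul_add_first, half_det]
  · rw [det_colMat_smul_add_second, half_det]
  · rw [det_colMat_smul_add_fourth, half_det]
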